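/- arXiv:math/9905166 — 3 statements merged into one kernel-verified Lean document; each statement's English description precedes it below -/
import Mathlib

section
/- For every vector v of I_{2,10} with ⟨v,v⟩ = −1, the orthogonal complement v⊥ = {x ∈ I_{2,10} : ⟨x,v⟩ = 0}, with the restricted bilinear form, is isometric to I_{2,9}. -/
open Matrix

/-- Gram matrix of the odd unimodular lattice `I_{p,m}`:
diagonal with `p` entries `+1` and `m` entries `-1`. -/
def gramI (p m : ℕ) : Matrix (Fin (p + m)) (Fin (p + m)) ℤ :=
  Matrix.diagonal fun i => if (i : ℕ) < p then 1 else -1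

/-- Gram matrix of the even unimodular lattice `II_{1,1}`. -/
def gramII : Matrix (Fin 2) (Fin 2) ℤ := !![0, 1; 1, 0]

/-- Gram matrix of the direct sum of two lattices. -/
def gramSum {n m : ℕ} (G : Matrix (Fin n) (Fin n) ℤ) (H : Matrix (Fin m) (Fin m) ℤ) :
    Matrix (Fin (n + m)) (Fin (n + m)) ℤ :=
  Matrix.reindex finSumFinEquiv finSumFinEquiv (Matrix.fromBlocks G 0 0 H)

/-- A lattice (given by its Gram matrix) is even when every vector has even norm. -/
def EvenGram {n : ℕ} (G : Matrix (Fin n) (Fin n) ℤ) : Prop :=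
  ∀ v : Fin n → ℤ, Even (v ⬝ᵥ G.mulVec v)

/-- A lattice (given by its Gram matrix) has signature `(p, m)` when its real extension is
equivalent to the diagonal form with `p` entries `+1` and `m` entries `-1`. -/
def HasSignature {n : ℕ} (G : Matrix (Fin n) (Fin n) ℤ) (p m : ℕ) : Prop :=
  n = p + m ∧ ∃ P : Matrix (Fin n) (Fin n) ℝ, IsUnit P.det ∧
    Pᵀ * (G.map (Int.cast : ℤ → ℝ)) * P =
      Matrix.diagonal fun i : Fin n => if (i : ℕ) < p then 1 else -1
/-- The automorphism group of the lattice with Gram matrix `G`: invertible integer matrices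
preserving the bilinear form. -/
def gramAut {n : ℕ} (G : Matrix (Fin n) (Fin n) ℤ) : Subgroup (Matrix (Fin n) (Fin n) ℤ)ˣ where
  carrier := {P | (P : Matrix (Fin n) (Fin n) ℤ)ᵀ * G * (P : Matrix (Fin n) (Fin n) ℤ) = G}
  one_mem' := by simp
  mul_mem' := by
    intro P Q hP hQ
    have hP' : (P : Matrix (Fin n) (Fin n) ℤ)ᵀ * G * (P : Matrix (Fin n) (Fin n) ℤ) = G := hP
    have hQ' : (Q : Matrix (Fin n) (Fin n) ℤ)ᵀ * G * (Q : Matrix (Fin n) (Fin n) ℤ) = G := hQ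
    show ((P * Q : (Matrix (Fin n) (Fin n) ℤ)ˣ) : Matrix (Fin n) (Fin n) ℤ)ᵀ * G *
        ((P * Q : (Matrix (Fin n) (Fin n) ℤ)ˣ) : Matrix (Fin n) (Fin n) ℤ) = G
    have hc : ((P * Q : (Matrix (Fin n) (Fin n) ℤ)ˣ) : Matrix (Fin n) (Fin n) ℤ) =
        (P : Matrix (Fin n) (Fin n) ℤ) * (Q : Matrix (Fin n) (Fin n) ℤ) := rfl
    rw [hc, Matrix.transpose_mul]
    calc (Q : Matrix (Fin n) (Fin n) ℤ)ᵀ * (P : Matrix (Fin n) (Fin n) ℤ)ᵀ * G *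
          ((P : Matrix (Fin n) (Fin n) ℤ) * (Q : Matrix (Fin n) (Fin n) ℤ))
        = (Q : Matrix (Fin n) (Fin n) ℤ)ᵀ *
            ((P : Matrix (Fin n) (Fin n) ℤ)ᵀ * G * (P : Matrix (Fin n) (Fin n) ℤ)) *
            (Q : Matrix (Fin n) (Fin n) ℤ) := by simp only [Matrix.mul_assoc]
      _ = G := by rw [hP', hQ']
  inv_mem' := by
    intro P hP
    have hP' : (P : Matrix (Fin n) (Fin n) ℤ)ᵀ * G * (P : Matrix (Fin n) (Fin n) ℤ) = G := hP
    show ((P⁻¹ : (Matrix (Fin n) (Fin n) ℤ)ˣ) : Matrix (Fin n) (Fin n) ℤ)ᵀ * G *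
        ((P⁻¹ : (Matrix (Fin n) (Fin n) ℤ)ˣ) : Matrix (Fin n) (Fin n) ℤ) = G
    calc ((P⁻¹ : (Matrix (Fin n) (Fin n) ℤ)ˣ) : Matrix (Fin n) (Fin n) ℤ)ᵀ * G *
          ((P⁻¹ : (Matrix (Fin n) (Fin n) ℤ)ˣ) : Matrix (Fin n) (Fin n) ℤ)
        = ((P⁻¹ : (Matrix (Fin n) (Fin n) ℤ)ˣ) : Matrix (Fin n) (Fin n) ℤ)ᵀ *
            ((P : Matrix (Fin n) (Fin n) ℤ)ᵀ * G * (P : Matrix (Fin n) (Fin n) ℤ)) *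
            ((P⁻¹ : (Matrix (Fin n) (Fin n) ℤ)ˣ) : Matrix (Fin n) (Fin n) ℤ) := by rw [hP']
      _ = ((P : Matrix (Fin n) (Fin n) ℤ) *
            ((P⁻¹ : (Matrix (Fin n) (Fin n) ℤ)ˣ) : Matrix (Fin n) (Fin n) ℤ))ᵀ * G *
            ((P : Matrix (Fin n) (Fin n) ℤ) *
            ((P⁻¹ : (Matrix (Fin n) (Fin n) ℤ)ˣ) : Matrix (Fin n) (Fin n) ℤ)) := by
          simp only [Matrix.transpose_mul, Matrix.mul_assoc]
      _ = G := by rw [Units.mul_inv]; simp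
/-- The real symmetric bilinear form on `Fin N → ℝ` with matrix `G`. -/
def gramBilinR {N : ℕ} (G : Matrix (Fin N) (Fin N) ℤ) :
    (Fin N → ℝ) →ₗ[ℝ] (Fin N → ℝ) →ₗ[ℝ] ℝ :=
  LinearMap.mk₂ ℝ (fun x y => x ⬝ᵥ (G.map (Int.cast : ℤ → ℝ)).mulVec y)
    (fun x x' y => by simp only [add_dotProduct])
    (fun c x y => by simp only [smul_dotProduct])
    (fun x y y' => by simp only [Matrix.mulVec_add, dotProduct_add])
    (fun c x y => by simp only [Matrix.mulVec_smul, dotProduct_smul])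

/-- `L` is a full-rank lattice in the real quadratic space `(V, φ)` whose Gram matrix in some
basis is the integer matrix `G`; i.e. `L` is (as a lattice with the restricted form)
a copy of the lattice with Gram matrix `G`. -/
def SpansWithGram {V : Type*} [AddCommGroup V] [Module ℝ V]
    (φ : V →ₗ[ℝ] V →ₗ[ℝ] ℝ) {n : ℕ} (L : Submodule ℤ V) (G : Matrix (Fin n) (Fin n) ℤ) : Prop :=
  ∃ b : Module.Basis (Fin n) ℝ V, L = Submodule.span ℤ (Set.range ⇑b) ∧
    ∀ i j, φ (b i) (b j) = ((G i j : ℤ) : ℝ)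

/-- The dual of a subset `S` of a real quadratic space: vectors pairing integrally with `S`. -/
def dualSet {V : Type*} [AddCommGroup V] [Module ℝ V]
    (φ : V →ₗ[ℝ] V →ₗ[ℝ] ℝ) (S : Set V) : Set V :=
  {x | ∀ y ∈ S, ∃ k : ℤ, φ x y = (k : ℝ)}

/-- `M` is an odd unimodular full-rank lattice in the real quadratic space `(V, φ)`. -/
def IsOddUnimodularLat {V : Type*} [AddCommGroup V] [Module ℝ V]
    (φ : V →ₗ[ℝ] V →ₗ[ℝ] ℝ) (M : Submodule ℤ V) : Prop :=
  (∃ (m : ℕ) (H : Matrix (Fin m) (Fin m) ℤ), SpansWithGram φ M H ∧ IsUnit H.det) ∧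
    ¬ ∀ x ∈ M, ∃ k : ℤ, φ x x = 2 * (k : ℝ)

/-- The standard integer lattice inside `Fin N → ℝ`. -/
def stdLat (N : ℕ) : Submodule ℤ (Fin N → ℝ) :=
  Submodule.span ℤ (Set.range fun i : Fin N => (Pi.single i (1 : ℝ) : Fin N → ℝ))

/-- Coordinatewise inclusion `ℤ^N → ℚ^N`. -/
def intToRat (N : ℕ) : (Fin N → ℤ) →ₗ[ℤ] (Fin N → ℚ) where
  toFun x := fun i => (x i : ℚ)
  map_add' x y := by funext i; push_cast; simp
  map_smul' c x := by
    funext i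
    simp only [Pi.smul_apply, smul_eq_mul, RingHom.id_apply, zsmul_eq_mul]
    push_cast
    ring

/-- The dual lattice of `ℤ^N` (with the form given by the Gram matrix `G`)
inside `ℚ^N`. -/
def ratDual {N : ℕ} (G : Matrix (Fin N) (Fin N) ℤ) : Submodule ℤ (Fin N → ℚ) where
  carrier := {x | ∀ y : Fin N → ℤ, ∃ k : ℤ,
    x ⬝ᵥ (G.map (Int.cast : ℤ → ℚ)).mulVec (intToRat N y) = (k : ℚ)}
  zero_mem' := by intro y; exact ⟨0, by simp⟩
  add_mem' := by
    intro a b ha hb y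
    obtain ⟨k, hk⟩ := ha y
    obtain ⟨l, hl⟩ := hb y
    exact ⟨k + l, by rw [add_dotProduct, hk, hl]; push_cast; ring⟩
  smul_mem' := by
    intro c x hx y
    obtain ⟨k, hk⟩ := hx y
    refine ⟨c * k, ?_⟩
    show (c • x) ⬝ᵥ _ = _
    rw [smul_dotProduct, hk, zsmul_eq_mul]
    push_cast
    ring

/-- The set of vectors of `ℚ^N` pairing integrally with the sublattice `A` of `ℤ^N`,
with respect to the form with Gram matrix `G`. -/
def pairDual {N : ℕ} (G : Matrix (Fin N) (Fin N) ℤ) (A : Submodule ℤ (Fin N → ℤ)) :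
    Submodule ℤ (Fin N → ℚ) where
  carrier := {x | ∀ y ∈ A, ∃ k : ℤ,
    x ⬝ᵥ (G.map (Int.cast : ℤ → ℚ)).mulVec (intToRat N y) = (k : ℚ)}
  zero_mem' := by intro y _; exact ⟨0, by simp⟩
  add_mem' := by
    intro a b ha hb y hy
    obtain ⟨k, hk⟩ := ha y hy
    obtain ⟨l, hl⟩ := hb y hy
    exact ⟨k + l, by rw [add_dotProduct, hk, hl]; push_cast; ring⟩
  smul_mem' := by
    intro c x hx y hy
    obtain ⟨k, hk⟩ := hx y hy
    refine ⟨c * k, ?_⟩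
    show (c • x) ⬝ᵥ _ = _
    rw [smul_dotProduct, hk, zsmul_eq_mul]
    push_cast
    ring

/-- The dual lattice `A*` of a sublattice `A` of `ℤ^N`, taken inside `A ⊗ ℚ`
(realized as the ℚ-span of `A` in `ℚ^N`), with respect to the form with Gram matrix `G`. -/
def relDual {N : ℕ} (G : Matrix (Fin N) (Fin N) ℤ) (A : Submodule ℤ (Fin N → ℤ)) :
    Submodule ℤ (Fin N → ℚ) :=
  (Submodule.span ℚ (intToRat N '' (A : Set (Fin N → ℤ)))).restrictScalars ℤ ⊓ pairDual G A

/-- The orthogonal complement in `ℤ^N` (with Gram matrix `G`) of a sublattice `A`. -/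
def perpSub {N : ℕ} (G : Matrix (Fin N) (Fin N) ℤ) (A : Submodule ℤ (Fin N → ℤ)) :
    Submodule ℤ (Fin N → ℤ) where
  carrier := {x | ∀ a ∈ A, x ⬝ᵥ G.mulVec a = 0}
  zero_mem' := by intro a _; simp
  add_mem' := by
    intro x y hx hy a ha
    rw [add_dotProduct, hx a ha, hy a ha, add_zero]
  smul_mem' := by
    intro c x hx a ha
    show (c • x) ⬝ᵥ _ = 0
    rw [smul_dotProduct, hx a ha, smul_zero]

/-- A vector of a lattice is primitive if it is not a non-unit integer multiple. -/
def IsPrimVec {N : ℕ} (v : Fin N → ℤ) : Prop :=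
  ∀ (k : ℤ) (w : Fin N → ℤ), v = k • w → IsUnit k

/-- A sublattice `A` of `ℤ^N` is primitive if the quotient is torsion-free. -/
def IsPrimSub {N : ℕ} (A : Submodule ℤ (Fin N → ℤ)) : Prop :=
  ∀ (x : Fin N → ℤ) (k : ℤ), k ≠ 0 → k • x ∈ A → x ∈ A

/-- The quotient `A^⊥ / A` of `ℤ^N` (with Gram matrix `G`), with its induced bilinear form,
is isometric to the lattice with Gram matrix `H`: there is a surjection `π` from `A^⊥` with
kernel `A ∩ A^⊥` identifying the induced form with `H`. -/
def QuotIsometric {N m : ℕ} (G : Matrix (Fin N) (Fin N) ℤ) (A : Submodule ℤ (Fin N → ℤ))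
    (H : Matrix (Fin m) (Fin m) ℤ) : Prop :=
  ∃ π : (perpSub G A) →ₗ[ℤ] (Fin m → ℤ), Function.Surjective π ∧
    (∀ x : perpSub G A, π x = 0 ↔ (x : Fin N → ℤ) ∈ A) ∧
    (∀ x y : perpSub G A,
      (x : Fin N → ℤ) ⬝ᵥ G.mulVec (y : Fin N → ℤ) = π x ⬝ᵥ H.mulVec (π y))

/-!
The isometries of `I_{2,10}` act transitively on the vectors of norm `-1`, so `v⊥` is isometric
to `e₁₁⊥ = I_{2,9}`. Transitivity is a descent on `v₀² + v₁²`. A signed permutation within the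
two blocks of coordinates makes `0 ≤ v₀ ≤ v₁` and `0 ≤ v₂ ≤ ⋯ ≤ v₁₁`; if then `v₁ = 0`, the norm
forces `v = e₁₁`. Otherwise the reflection in one of the roots `e₁ + e₉ + e₁₀ + e₁₁`,
`e₀ + e₁ + e₁₁`, `e₀ + e₁ + e₈ + ⋯ + e₁₁` strictly decreases `v₀² + v₁²`.
-/

section Isometry

variable {R : Type*} [CommRing R] {ι : Type*} [Fintype ι]

def IsIsometry (G : Matrix ι ι R) (g : (ι → R) ≃ₗ[R] (ι → R)) : Prop :=
  ∀ x y, g x ⬝ᵥ G *ᵥ g y = x ⬝ᵥ G *ᵥ y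

theorem IsIsometry.trans {G : Matrix ι ι R} {g h : (ι → R) ≃ₗ[R] (ι → R)}
    (hg : IsIsometry G g) (hh : IsIsometry G h) : IsIsometry G (g.trans h) := fun x y =>
  (hh (g x) (g y)).trans (hg x y)

theorem dotProduct_mulVec_comm_of_isSymm {G : Matrix ι ι R} (hG : G.IsSymm) (x y : ι → R) :
    x ⬝ᵥ G *ᵥ y = y ⬝ᵥ G *ᵥ x := by
  rw [dotProduct_mulVec, ← mulVec_transpose, hG, dotProduct_comm]

section Reflection

variable {G : Matrix ι ι R} {w : ι → R} {c : R}

variable (G w c) in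
def reflectionMap : (ι → R) →ₗ[R] (ι → R) where
  toFun x := x - (c * (x ⬝ᵥ G *ᵥ w)) • w
  map_add' x y := by simp only [add_dotProduct, mul_add, add_smul]; abel
  map_smul' a x := by
    simp only [smul_dotProduct, smul_eq_mul, smul_sub, smul_smul, RingHom.id_apply,
      mul_left_comm c a]

theorem reflectionMap_apply (x : ι → R) :
    reflectionMap G w c x = x - (c * (x ⬝ᵥ G *ᵥ w)) • w := rfl

theorem dotProduct_reflectionMap (hc : c * (w ⬝ᵥ G *ᵥ w) = 2) (x : ι → R) :
    reflectionMap G w c x ⬝ᵥ G *ᵥ w = -(x ⬝ᵥ G *ᵥ w) := by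
  rw [reflectionMap_apply, sub_dotProduct, smul_dotProduct, smul_eq_mul]
  linear_combination -(x ⬝ᵥ G *ᵥ w) * hc

theorem involutive_reflectionMap (hc : c * (w ⬝ᵥ G *ᵥ w) = 2) :
    Function.Involutive (reflectionMap G w c) := fun x => by
  rw [reflectionMap_apply (reflectionMap G w c x), dotProduct_reflectionMap hc, reflectionMap_apply]
  simp

/-- Parametrised by `c = 2 / ⟨w, w⟩`, so that over `ℤ` it covers the reflections in vectors of
norm `±1` and `±2`. -/
def reflection (hc : c * (w ⬝ᵥ G *ᵥ w) = 2) : (ι → R) ≃ₗ[R] (ι → R) :=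
  LinearEquiv.ofInvolutive (reflectionMap G w c) (involutive_reflectionMap hc)

theorem reflection_apply (hc : c * (w ⬝ᵥ G *ᵥ w) = 2) (x : ι → R) :
    reflection hc x = x - (c * (x ⬝ᵥ G *ᵥ w)) • w := rfl

theorem reflection_apply_apply (hc : c * (w ⬝ᵥ G *ᵥ w) = 2) (x : ι → R) (i : ι) :
    reflection hc x i = x i - c * (x ⬝ᵥ G *ᵥ w) * w i := by
  simp [reflection_apply, mul_assoc]

theorem isIsometry_reflection (hc : c * (w ⬝ᵥ G *ᵥ w) = 2) (hG : G.IsSymm) :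
    IsIsometry G (reflection hc) := fun x y => by
  have hwy := dotProduct_mulVec_comm_of_isSymm hG w y
  simp only [reflection_apply, sub_dotProduct,
    dotProduct_sub, mulVec_sub, mulVec_smul, smul_dotProduct, dotProduct_smul, smul_eq_mul, hwy]
  linear_combination (c * (x ⬝ᵥ G *ᵥ w) * (y ⬝ᵥ G *ᵥ w)) * hc

end Reflection

end Isometry

section SignChange

variable {R : Type*} [CommRing R] {ι : Type*} {ε : ι → R}

def signChange (hε : ε * ε = 1) : (ι → R) ≃ₗ[R] (ι → R) :=
  LinearEquiv.ofInvolutive (LinearMap.mulLeft R ε) fun x => by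
    simp [← mul_assoc, hε]

theorem signChange_apply (hε : ε * ε = 1) (x : ι → R) : signChange hε x = ε * x := rfl

end SignChange

section Diagonal

variable {R : Type*} [CommRing R] {ι : Type*} [Fintype ι] [DecidableEq ι] {d : ι → R}

theorem dotProduct_diagonal_mulVec (x y : ι → R) :
    x ⬝ᵥ diagonal d *ᵥ y = ∑ i, x i * y i * d i := by
  simp only [dotProduct, mulVec_diagonal]
  exact Finset.sum_congr rfl fun i _ => by ring

theorem isIsometry_funCongrLeft (σ : Equiv.Perm ι) (hσ : ∀ i, d (σ i) = d i) :
    IsIsometry (diagonal d) (LinearEquiv.funCongrLeft R R σ) := fun x y => by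
  simp only [dotProduct_diagonal_mulVec, LinearEquiv.funCongrLeft_apply, LinearMap.funLeft_apply]
  rw [← Equiv.sum_comp σ (fun i => x i * y i * d i)]
  simp only [hσ]

theorem isIsometry_signChange {ε : ι → R} (hε : ε * ε = 1) :
    IsIsometry (diagonal d) (signChange hε) := fun x y => by
  have hεi (i : ι) : ε i * ε i = 1 := congrFun hε i
  simp only [dotProduct_diagonal_mulVec, signChange_apply, Pi.mul_apply]
  exact Finset.sum_congr rfl fun i _ => by linear_combination (x i * y i * d i) * hεi i

end Diagonal

section Perp

open Submodule

variable {N : ℕ} {G : Matrix (Fin N) (Fin N) ℤ}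

theorem mem_perpSub_span_singleton {v x : Fin N → ℤ} :
    x ∈ perpSub G (span ℤ {v}) ↔ x ⬝ᵥ G *ᵥ v = 0 := by
  refine ⟨fun h => h v (mem_span_singleton_self v), fun h a ha => ?_⟩
  obtain ⟨k, rfl⟩ := mem_span_singleton.mp ha
  rw [mulVec_smul, dotProduct_smul, h, smul_zero]

theorem IsIsometry.map_perpSub_span_singleton {g : (Fin N → ℤ) ≃ₗ[ℤ] (Fin N → ℤ)}
    (hg : IsIsometry G g) (v : Fin N → ℤ) :
    (perpSub G (span ℤ {v})).map (g : (Fin N → ℤ) →ₗ[ℤ] (Fin N → ℤ)) =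
      perpSub G (span ℤ {g v}) := by
  ext x
  rw [mem_map_equiv, mem_perpSub_span_singleton, mem_perpSub_span_singleton, ← hg,
    LinearEquiv.apply_symm_apply]

noncomputable def IsIsometry.perpSubEquiv {g : (Fin N → ℤ) ≃ₗ[ℤ] (Fin N → ℤ)}
    (hg : IsIsometry G g) {v w : Fin N → ℤ} (hw : g v = w) :
    perpSub G (span ℤ {v}) ≃ₗ[ℤ] perpSub G (span ℤ {w}) :=
  LinearEquiv.ofSubmodules g _ _ (hw ▸ hg.map_perpSub_span_singleton v)

theorem mem_perpSub_span_single_last {n : ℕ} {d : Fin (n + 1) → ℤ} (hd : d (Fin.last n) ≠ 0)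
    {x : Fin (n + 1) → ℤ} :
    x ∈ perpSub (diagonal d) (span ℤ {Pi.single (Fin.last n) 1}) ↔ x (Fin.last n) = 0 := by
  rw [mem_perpSub_span_singleton, dotProduct_diagonal_mulVec]
  simp [Pi.single_apply, hd]

noncomputable def perpSubSingleLastEquiv {n : ℕ} {d : Fin (n + 1) → ℤ} (hd : d (Fin.last n) ≠ 0) :
    perpSub (diagonal d) (span ℤ {Pi.single (Fin.last n) 1}) ≃ₗ[ℤ] (Fin n → ℤ) :=
  LinearEquiv.ofBijective ((LinearMap.funLeft ℤ ℤ Fin.castSucc).comp (Submodule.subtype _)) <| by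
    refine ⟨fun x y hxy => Subtype.ext <| funext fun i => ?_, fun y => ?_⟩
    · induction i using Fin.lastCases with
      | last =>
        rw [(mem_perpSub_span_single_last hd).1 x.2, (mem_perpSub_span_single_last hd).1 y.2]
      | cast i => exact congrFun hxy i
    · exact ⟨⟨Fin.snoc y 0, (mem_perpSub_span_single_last hd).2 (Fin.snoc_last _ _)⟩,
        funext fun i => Fin.snoc_castSucc (α := fun _ => ℤ) _ _ i⟩

theorem perpSubSingleLastEquiv_apply {n : ℕ} {d : Fin (n + 1) → ℤ} (hd : d (Fin.last n) ≠ 0)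
    (x : perpSub (diagonal d) (span ℤ {Pi.single (Fin.last n) 1})) (i : Fin n) :
    perpSubSingleLastEquiv hd x i = (x : Fin (n + 1) → ℤ) i.castSucc := rfl

theorem dotProduct_diagonal_perpSubSingleLastEquiv {n : ℕ} {d : Fin (n + 1) → ℤ}
    (hd : d (Fin.last n) ≠ 0) (x y : perpSub (diagonal d) (span ℤ {Pi.single (Fin.last n) 1})) :
    perpSubSingleLastEquiv hd x ⬝ᵥ diagonal (d ∘ Fin.castSucc) *ᵥ perpSubSingleLastEquiv hd y =
      (x : Fin (n + 1) → ℤ) ⬝ᵥ diagonal d *ᵥ (y : Fin (n + 1) → ℤ) := by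
  simp only [dotProduct_diagonal_mulVec, Fin.sum_univ_castSucc,
    (mem_perpSub_span_single_last hd).1 x.2, perpSubSingleLastEquiv_apply, Function.comp_apply]
  simp

end Perp

section Sorting

variable {p m : ℕ}

def IsSortedInBlocks (v : Fin (p + m) → ℤ) : Prop :=
  (∀ i, 0 ≤ v i) ∧ Monotone (v ∘ Fin.castAdd m) ∧ Monotone (v ∘ Fin.natAdd p)

theorem IsSortedInBlocks.apply_le_apply {v : Fin (p + m) → ℤ} (hs : IsSortedInBlocks v)
    {i j : Fin (p + m)} (hi : p ≤ i) (hij : i ≤ j) : v i ≤ v j := by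
  obtain ⟨i, rfl⟩ : ∃ i', Fin.natAdd p i' = i := ⟨⟨i - p, by omega⟩, Fin.ext (by simp; omega)⟩
  obtain ⟨j, rfl⟩ : ∃ j', Fin.natAdd p j' = j := ⟨⟨j - p, by omega⟩, Fin.ext (by simp; omega)⟩
  exact hs.2.2 ((Fin.natAdd_le_natAdd_iff p).1 hij)

theorem exists_signChange_eq_abs (v : Fin (p + m) → ℤ) :
    ∃ (ε : Fin (p + m) → ℤ) (hε : ε * ε = 1), signChange hε v = |v| := by
  refine ⟨fun i => if 0 ≤ v i then 1 else -1, funext fun i => by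
    simp only [Pi.mul_apply, Pi.one_apply]; split_ifs <;> norm_num, ?_⟩
  funext i
  simp only [signChange_apply, Pi.mul_apply, Pi.abs_apply]
  split_ifs with h
  · rw [one_mul, abs_of_nonneg h]
  · rw [abs_of_neg (not_le.mp h), neg_one_mul]

def blockPerm (α : Equiv.Perm (Fin p)) (β : Equiv.Perm (Fin m)) : Equiv.Perm (Fin (p + m)) :=
  finSumFinEquiv.permCongr (Equiv.sumCongr α β)

@[simp]
theorem blockPerm_castAdd (α : Equiv.Perm (Fin p)) (β : Equiv.Perm (Fin m)) (i : Fin p) :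
    blockPerm α β (Fin.castAdd m i) = Fin.castAdd m (α i) := by
  simp [blockPerm, Equiv.permCongr_apply]

@[simp]
theorem blockPerm_natAdd (α : Equiv.Perm (Fin p)) (β : Equiv.Perm (Fin m)) (i : Fin m) :
    blockPerm α β (Fin.natAdd p i) = Fin.natAdd p (β i) := by
  simp [blockPerm, Equiv.permCongr_apply]

theorem isIsometry_gramI_blockPerm (α : Equiv.Perm (Fin p)) (β : Equiv.Perm (Fin m)) :
    IsIsometry (gramI p m) (LinearEquiv.funCongrLeft ℤ ℤ (blockPerm α β)) := by
  refine isIsometry_funCongrLeft _ fun i => ?_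
  induction i using Fin.addCases <;> simp

theorem exists_isIsometry_gramI_isSortedInBlocks (v : Fin (p + m) → ℤ) :
    ∃ g : (Fin (p + m) → ℤ) ≃ₗ[ℤ] (Fin (p + m) → ℤ), IsIsometry (gramI p m) g ∧
      IsSortedInBlocks (g v) ∧
      ∑ i, g v (Fin.castAdd m i) ^ 2 = ∑ i, v (Fin.castAdd m i) ^ 2 := by
  obtain ⟨ε, hε, hεv⟩ := exists_signChange_eq_abs v
  obtain ⟨α, hα⟩ : ∃ α : Equiv.Perm (Fin p), Monotone (|v| ∘ Fin.castAdd m ∘ α) :=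
    ⟨_, Tuple.monotone_sort (|v| ∘ Fin.castAdd m)⟩
  obtain ⟨β, hβ⟩ : ∃ β : Equiv.Perm (Fin m), Monotone (|v| ∘ Fin.natAdd p ∘ β) :=
    ⟨_, Tuple.monotone_sort (|v| ∘ Fin.natAdd p)⟩
  refine ⟨(signChange hε).trans (LinearEquiv.funCongrLeft ℤ ℤ (blockPerm α β)),
    (isIsometry_signChange hε).trans (isIsometry_gramI_blockPerm α β), ⟨?_, ?_, ?_⟩, ?_⟩
  all_goals simp only [LinearEquiv.trans_apply, hεv, LinearEquiv.funCongrLeft_apply,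
    LinearMap.funLeft_apply]
  · exact fun i => abs_nonneg _
  · simpa [Function.comp_def] using hα
  · simpa [Function.comp_def] using hβ
  · simp only [blockPerm_castAdd, Pi.abs_apply, sq_abs]
    exact Equiv.sum_comp α (fun i => v (Fin.castAdd m i) ^ 2)

end Sorting

theorem sq_add_sq_le_sq_add_sq {u t p q : ℤ} (ht : 0 ≤ t) (hq : 0 ≤ q) (htu : t ≤ u)
    (hup : u ≤ p) (hqp : q ≤ p) (hsum : u + t ≤ p + q) : u ^ 2 + t ^ 2 ≤ p ^ 2 + q ^ 2 := by
  rcases le_total t q with htq | hqt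
  · nlinarith [mul_le_mul hup hup (by linarith) (by linarith), mul_le_mul htq htq ht hq]
  · nlinarith [mul_le_mul (by linarith : t - q ≤ p - u) (by linarith : t + q ≤ p + u)
      (by linarith) (by linarith)]

/-- For a vector `(q, p; c₂, …, c₁₁)` of norm `-1` with sorted blocks and `T = c₂² + ⋯ + c₇²`:
the conditions under which reflecting in `e₁ + e₉ + e₁₀ + e₁₁`, `e₀ + e₁ + e₁₁`,
`e₀ + e₁ + e₈ + ⋯ + e₁₁` decreases `p² + q²`. -/
theorem reflection_conditions {p q T c₈ c₉ c₁₀ c₁₁ : ℤ} (hq : 0 ≤ q) (hqp : q ≤ p) (hp : 0 < p)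
    (hT : 0 ≤ T) (hT₈ : T ≤ 6 * c₈ ^ 2) (h₈ : 0 ≤ c₈) (h₈₉ : c₈ ≤ c₉) (h₉₁₀ : c₉ ≤ c₁₀)
    (h₁₀₁₁ : c₁₀ ≤ c₁₁) (hnorm : p ^ 2 + q ^ 2 + 1 = T + c₈ ^ 2 + c₉ ^ 2 + c₁₀ ^ 2 + c₁₁ ^ 2) :
    (p < c₉ + c₁₀ + c₁₁ ∧ c₉ + c₁₀ + c₁₁ < 3 * p) ∨
    (c₁₁ < p + q ∧ p + q < 2 * c₁₁) ∨
    (p + q < c₈ + c₉ + c₁₀ + c₁₁ ∧ c₈ + c₉ + c₁₀ + c₁₁ < 2 * (p + q)) := by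
  have h₉ : 0 ≤ c₉ := h₈.trans h₈₉
  have h₁₀ : 0 ≤ c₁₀ := h₉.trans h₉₁₀
  rcases le_or_gt (c₉ + c₁₀ + c₁₁) p with hs | hs
  · refine Or.inr (Or.inr ⟨?_, by linarith⟩)
    by_contra! h
    -- then `T + c₈² + ⋯ + c₁₁² ≤ (c₉ + c₁₀ + c₁₁)² + c₈² ≤ p² + q²`
    have hcross : c₉ ^ 2 + c₁₀ ^ 2 + c₁₁ ^ 2 + 6 * c₈ ^ 2 ≤ (c₉ + c₁₀ + c₁₁) ^ 2 := by
      nlinarith [mul_le_mul h₈₉ (h₈₉.trans h₉₁₀) h₈ h₉,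
        mul_le_mul h₈₉ (h₈₉.trans (h₉₁₀.trans h₁₀₁₁)) h₈ h₉,
        mul_le_mul (h₈₉.trans h₉₁₀) (h₈₉.trans (h₉₁₀.trans h₁₀₁₁)) h₈ h₁₀]
    have := sq_add_sq_le_sq_add_sq (u := c₉ + c₁₀ + c₁₁) (t := c₈) h₈ hq (by linarith) hs hqp
      (by linarith)
    linarith
  rcases lt_or_ge (c₉ + c₁₀ + c₁₁) (3 * p) with hs' | hs'
  · exact Or.inl ⟨hs, hs'⟩
  have hpc : p ≤ c₁₁ := by linarith
  have hC : c₁₁ < p + q := by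
    by_contra! h
    nlinarith [sq_nonneg (c₉ - c₁₀), mul_le_mul h (le_refl (p + q)) (by linarith) (by linarith)]
  rcases lt_or_ge (p + q) (2 * c₁₁) with hC' | hC'
  · exact Or.inr (Or.inl ⟨hC, hC'⟩)
  -- only `(1, 1; 0, …, 0, 1, 1, 1)` is left, and the third condition holds for it
  have hqeq : q = p := by linarith
  have hc₁₁ : c₁₁ = p := by linarith
  have hc₁₀ : c₁₀ = p := by linarith
  have hc₉ : c₉ = p := by linarith
  rw [hqeq, hc₁₁, hc₁₀, hc₉] at hnorm
  have hp₁ : p = 1 := by nlinarith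
  have hc₈ : c₈ = 0 := by nlinarith
  exact Or.inr (Or.inr ⟨by linarith, by linarith⟩)

section ITwoTen

theorem dotProduct_gramI_two_ten_mulVec (x y : Fin (2 + 10) → ℤ) :
    x ⬝ᵥ gramI 2 10 *ᵥ y = x 0 * y 0 + x 1 * y 1 - x 2 * y 2 - x 3 * y 3 - x 4 * y 4 - x 5 * y 5
      - x 6 * y 6 - x 7 * y 7 - x 8 * y 8 - x 9 * y 9 - x 10 * y 10 - x 11 * y 11 := by
  simp [gramI, dotProduct, Fin.sum_univ_succ, mulVec_diagonal]
  ring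

theorem exists_isIsometry_head_sq_lt {v : Fin (2 + 10) → ℤ} (hs : IsSortedInBlocks v)
    (hv : v ⬝ᵥ gramI 2 10 *ᵥ v = -1) (h₁ : 0 < v 1) :
    ∃ g : (Fin (2 + 10) → ℤ) ≃ₗ[ℤ] (Fin (2 + 10) → ℤ), IsIsometry (gramI 2 10) g ∧
      g v 0 ^ 2 + g v 1 ^ 2 < v 0 ^ 2 + v 1 ^ 2 := by
  have hsq {i : Fin (2 + 10)} (hi : 2 ≤ (i : ℕ)) (hi₈ : i ≤ 8) : v i ^ 2 ≤ v 8 ^ 2 :=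
    pow_le_pow_left₀ (hs.1 i) (hs.apply_le_apply hi hi₈) 2
  have hT₈ : v 2 ^ 2 + v 3 ^ 2 + v 4 ^ 2 + v 5 ^ 2 + v 6 ^ 2 + v 7 ^ 2 ≤ 6 * v 8 ^ 2 := by
    linarith [hsq (i := 2) le_rfl (by decide), hsq (i := 3) (by decide) (by decide),
      hsq (i := 4) (by decide) (by decide), hsq (i := 5) (by decide) (by decide),
      hsq (i := 6) (by decide) (by decide), hsq (i := 7) (by decide) (by decide)]
  rw [dotProduct_gramI_two_ten_mulVec] at hv
  have h₀₁ : v 0 ≤ v 1 := hs.2.1 (by decide : (0 : Fin 2) ≤ 1)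
  suffices ∃ (w : Fin (2 + 10) → ℤ) (c : ℤ) (hc : c * (w ⬝ᵥ gramI 2 10 *ᵥ w) = 2),
      reflection hc v 0 ^ 2 + reflection hc v 1 ^ 2 < v 0 ^ 2 + v 1 ^ 2 by
    obtain ⟨w, c, hc, hlt⟩ := this
    exact ⟨reflection hc, isIsometry_reflection hc (isSymm_diagonal _), hlt⟩
  simp only [reflection_apply_apply, dotProduct_gramI_two_ten_mulVec]
  rcases reflection_conditions (hs.1 0) h₀₁ h₁ (by positivity) hT₈ (hs.1 8)
    (hs.apply_le_apply (i := 8) (j := 9) (by decide) (by decide))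
    (hs.apply_le_apply (i := 9) (j := 10) (by decide) (by decide))
    (hs.apply_le_apply (i := 10) (j := 11) (by decide) (by decide)) (by linarith) with h | h | h
  · refine ⟨![0, 1, 0, 0, 0, 0, 0, 0, 0, 1, 1, 1], -1, by decide, ?_⟩
    simp
    nlinarith [mul_pos (sub_pos.2 h.1) (sub_pos.2 h.2)]
  · refine ⟨![1, 1, 0, 0, 0, 0, 0, 0, 0, 0, 0, 1], 2, by decide, ?_⟩
    simp
    nlinarith [mul_pos (sub_pos.2 h.1) (sub_pos.2 h.2)]
  · refine ⟨![1, 1, 0, 0, 0, 0, 0, 0, 1, 1, 1, 1], -1, by decide, ?_⟩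
    simp
    nlinarith [mul_pos (sub_pos.2 h.1) (sub_pos.2 h.2)]

theorem eq_single_last_of_isSortedInBlocks {v : Fin (2 + 10) → ℤ} (hs : IsSortedInBlocks v)
    (hv : v ⬝ᵥ gramI 2 10 *ᵥ v = -1) (h₁ : v 1 ≤ 0) : v = Pi.single (Fin.last 11) 1 := by
  have h₀₁ : v 0 ≤ v 1 := hs.2.1 (by decide : (0 : Fin 2) ≤ 1)
  have hv₀ : v 0 = 0 := le_antisymm (h₀₁.trans h₁) (hs.1 0)
  have hv₁ : v 1 = 0 := le_antisymm h₁ (hs.1 1)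
  have hnorm : v 2 ^ 2 + v 3 ^ 2 + v 4 ^ 2 + v 5 ^ 2 + v 6 ^ 2 + v 7 ^ 2 + v 8 ^ 2 + v 9 ^ 2
      + v 10 ^ 2 + v 11 ^ 2 = 1 := by
    rw [dotProduct_gramI_two_ten_mulVec, hv₀, hv₁] at hv
    linear_combination -hv
  have hlow : 0 ≤ v 2 ^ 2 + v 3 ^ 2 + v 4 ^ 2 + v 5 ^ 2 + v 6 ^ 2 + v 7 ^ 2 + v 8 ^ 2
      + v 9 ^ 2 := by
    positivity
  have hv₁₀ : v 10 = 0 := by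
    nlinarith [hs.1 10, hs.apply_le_apply (i := 10) (j := 11) (by decide) (by decide)]
  have hz {i : Fin (2 + 10)} (hi : 2 ≤ (i : ℕ)) (hi' : i ≤ 10) : v i = 0 :=
    le_antisymm (hv₁₀ ▸ hs.apply_le_apply hi hi') (hs.1 i)
  have hvec : v = v 11 • Pi.single (Fin.last 11) 1 := by
    funext i
    fin_cases i
    all_goals simp [hv₀, hv₁]
    all_goals exact hz (by decide) (by decide)
  rw [hvec, dotProduct_gramI_two_ten_mulVec] at hv
  simp at hv
  have : v 11 = 1 := by nlinarith [hs.1 11]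
  rw [hvec, this, one_smul]

end ITwoTen

theorem exists_isIsometry_gramI_two_ten_apply_eq_single (v : Fin (2 + 10) → ℤ)
    (hv : v ⬝ᵥ gramI 2 10 *ᵥ v = -1) :
    ∃ g : (Fin (2 + 10) → ℤ) ≃ₗ[ℤ] (Fin (2 + 10) → ℤ),
      IsIsometry (gramI 2 10) g ∧ g v = Pi.single (Fin.last 11) 1 := by
  induction hn : (v 0 ^ 2 + v 1 ^ 2).toNat using Nat.strong_induction_on generalizing v with
  | _ n ih =>
  obtain ⟨g, hg, hs, hhead⟩ := exists_isIsometry_gramI_isSortedInBlocks v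
  replace hhead : g v 0 ^ 2 + g v 1 ^ 2 = v 0 ^ 2 + v 1 ^ 2 := by
    rwa [Fin.sum_univ_two, Fin.sum_univ_two] at hhead
  have hgv : g v ⬝ᵥ gramI 2 10 *ᵥ g v = -1 := (hg v v).trans hv
  rcases le_or_gt (g v 1) 0 with h₁ | h₁
  · exact ⟨g, hg, eq_single_last_of_isSortedInBlocks hs hgv h₁⟩
  obtain ⟨r, hr, hlt⟩ := exists_isIsometry_head_sq_lt hs hgv h₁
  have hdecr : (r (g v) 0 ^ 2 + r (g v) 1 ^ 2).toNat < n := by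
    have := add_nonneg (sq_nonneg (r (g v) 0)) (sq_nonneg (r (g v) 1))
    omega
  obtain ⟨g', hg', hg'v⟩ := ih _ hdecr (r (g v)) ((hr _ _).trans hgv) rfl
  exact ⟨(g.trans r).trans g', (hg.trans hr).trans hg', hg'v⟩

/-- For every vector `v` of `I_{2,10}` of norm `-1`, the orthogonal
complement of `v`, with the restricted form, is isometric to `I_{2,9}`. -/
theorem period_lattice_stmt8 (v : Fin (2 + 10) → ℤ)
    (hv : v ⬝ᵥ (gramI 2 10).mulVec v = -1) :
    ∃ e : perpSub (gramI 2 10) (Submodule.span ℤ {v}) ≃ₗ[ℤ] (Fin (2 + 9) → ℤ),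
      ∀ x y : perpSub (gramI 2 10) (Submodule.span ℤ {v}),
        (x : Fin (2 + 10) → ℤ) ⬝ᵥ (gramI 2 10).mulVec (y : Fin (2 + 10) → ℤ) =
          e x ⬝ᵥ (gramI 2 9).mulVec (e y) := by
  obtain ⟨g, hg, hgv⟩ := exists_isIsometry_gramI_two_ten_apply_eq_single v hv
  have hlast : (if ((Fin.last 11 : Fin 12) : ℕ) < 2 then 1 else -1 : ℤ) ≠ 0 := by decide
  refine ⟨(hg.perpSubEquiv hgv).trans (perpSubSingleLastEquiv hlast), fun x y => ?_⟩
  exact (hg x y).symm.trans (dotProduct_diagonal_perpSubSingleLastEquiv hlast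
    (hg.perpSubEquiv hgv x) (hg.perpSubEquiv hgv y)).symm
end

section
/- Every rank-2 primitive isotropic sublattice V of I_{2,10} contains a primitive vector w such that the lattice w⊥/⟨w⟩ (with its induced bilinear form) is odd. -/
open Matrix

/-! If a vector `w` of a diagonal lattice with odd diagonal entries `ε` has coordinates of both
parities, `w i` even and `w j` odd, then `x = ε j w j e_i - ε i w i e_j` is orthogonal to `w` and
has odd norm `ε i (ε j w j)² + ε j (ε i w i)²`. A primitive `w` is not even, so `w⊥` can only be
even when all coordinates of `w` are odd. A basis `b₀, b₁` of a primitive sublattice cannot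
consist of two such vectors: `b₀ + b₁` would then be twice a vector of the sublattice, although
its `b₀`-coordinate is `1`. -/

theorem not_forall_even_perp_of_even_of_odd {N : ℕ} {ε : Fin N → ℤ} (hε : ∀ k, Odd (ε k))
    {w : Fin N → ℤ} {i j : Fin N} (hi : Even (w i)) (hj : Odd (w j)) :
    ¬ ∀ x : perpSub (diagonal ε) (Submodule.span ℤ {w}),
        Even ((x : Fin N → ℤ) ⬝ᵥ (diagonal ε).mulVec (x : Fin N → ℤ)) := by
  have hij : i ≠ j := by
    rintro rfl
    exact Int.not_even_iff_odd.mpr hj hi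
  set x : Fin N → ℤ := (ε j * w j) • Pi.single i 1 + (-(ε i * w i)) • Pi.single j 1
  have hdot (v : Fin N → ℤ) : x ⬝ᵥ v = ε j * w j * v i - ε i * w i * v j := by
    simp only [x, add_dotProduct, smul_dotProduct, single_dotProduct, smul_eq_mul]
    ring
  have hmem : x ∈ perpSub (diagonal ε) (Submodule.span ℤ {w}) := by
    intro a ha
    obtain ⟨k, rfl⟩ := Submodule.mem_span_singleton.mp ha
    rw [mulVec_smul, dotProduct_smul, hdot, mulVec_diagonal, mulVec_diagonal, smul_eq_mul]
    ring
  have hnorm : x ⬝ᵥ (diagonal ε).mulVec x =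
      ε i * (ε j * w j) ^ 2 + ε j * (ε i * w i) ^ 2 := by
    rw [hdot, mulVec_diagonal, mulVec_diagonal]
    simp only [x, Pi.add_apply, Pi.smul_apply, Pi.single_eq_same, Pi.single_eq_of_ne hij,
      Pi.single_eq_of_ne hij.symm, smul_eq_mul]
    ring
  intro hall
  have hodd : Odd (ε i * (ε j * w j) ^ 2 + ε j * (ε i * w i) ^ 2) :=
    ((hε i).mul ((hε j).mul hj).pow).add_even
      (((hi.mul_left _).pow_of_ne_zero two_ne_zero).mul_left _)
  exact Int.not_even_iff_odd.mpr hodd (hnorm ▸ hall ⟨x, hmem⟩)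

section PrimitiveSublattice

variable {N : ℕ} {V : Submodule ℤ (Fin N → ℤ)} {ι : Type*}

theorem IsPrimSub.even_repr_of_forall_even (hV : IsPrimSub V) (b : Module.Basis ι ℤ V) {v : V}
    (hv : ∀ k, Even ((v : Fin N → ℤ) k)) (i : ι) : Even (b.repr v i) := by
  choose c hc using hv
  have hv2 : (v : Fin N → ℤ) = (2 : ℤ) • c := by
    funext k
    simp only [hc k, Pi.smul_apply, smul_eq_mul]
    ring
  have hcV : c ∈ V := hV c 2 two_ne_zero (hv2 ▸ v.2)
  have hveq : v = (2 : ℤ) • (⟨c, hcV⟩ : V) := Subtype.ext hv2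
  exact ⟨b.repr ⟨c, hcV⟩ i, by rw [hveq, map_smul, Finsupp.smul_apply, smul_eq_mul]; ring⟩

theorem IsPrimSub.isPrimVec_basis (hV : IsPrimSub V) (b : Module.Basis ι ℤ V) (i : ι) :
    IsPrimVec (b i : Fin N → ℤ) := by
  intro k x hx
  have hk : k ≠ 0 := by
    rintro rfl
    exact b.ne_zero i (Subtype.ext (by simpa using hx))
  have hxV : x ∈ V := hV x k hk (hx ▸ (b i).2)
  have hbi : b i = k • (⟨x, hxV⟩ : V) := Subtype.ext hx
  have hrepr := congrArg (fun u : V => b.repr u i) hbi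
  simp only [Module.Basis.repr_self, Finsupp.single_eq_same, map_smul, Finsupp.smul_apply,
    smul_eq_mul] at hrepr
  exact IsUnit.of_mul_eq_one _ hrepr.symm

end PrimitiveSublattice

theorem period_lattice_stmt11_general (V : Submodule ℤ (Fin (2 + 10) → ℤ))
    (hrank : Module.finrank ℤ V = 2) (hprim : IsPrimSub V) :
    ∃ w ∈ V, IsPrimVec w ∧
      ¬ ∀ x : perpSub (gramI 2 10) (Submodule.span ℤ {w}),
          Even ((x : Fin (2 + 10) → ℤ) ⬝ᵥ (gramI 2 10).mulVec (x : Fin (2 + 10) → ℤ)) := by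
  let b : Module.Basis (Fin 2) ℤ V := Module.finBasisOfFinrankEq ℤ V hrank
  have hε : ∀ k : Fin (2 + 10), Odd (if (k : ℕ) < 2 then (1 : ℤ) else -1) := by
    intro k
    split_ifs <;> decide
  by_contra! hperp
  have hodd (i : Fin 2) (k : Fin (2 + 10)) : Odd ((b i : Fin (2 + 10) → ℤ) k) := by
    by_contra hk
    obtain ⟨j, hj⟩ : ∃ j, Odd ((b i : Fin (2 + 10) → ℤ) j) := by
      by_contra! hall
      simpa using hprim.even_repr_of_forall_even b (fun k => Int.not_odd_iff_even.mp (hall k)) i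
    exact not_forall_even_perp_of_even_of_odd hε (Int.not_odd_iff_even.mp hk) hj
      (hperp _ (b i).2 (hprim.isPrimVec_basis b i))
  have hsum := hprim.even_repr_of_forall_even b (v := b 0 + b 1)
    (fun k => by simpa using (hodd 0 k).add_odd (hodd 1 k)) 0
  simp at hsum

/-- Every rank-2 primitive isotropic sublattice `V` of `I_{2,10}` contains
a primitive vector `w` such that `w⊥/⟨w⟩` (with its induced form) is odd, i.e. some vector
of `w⊥` has odd norm. -/
theorem period_lattice_stmt11 (V : Submodule ℤ (Fin (2 + 10) → ℤ))
    (hrank : Module.finrank ℤ V = 2) (hprim : IsPrimSub V)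
    (hiso : ∀ x ∈ V, ∀ y ∈ V, x ⬝ᵥ (gramI 2 10).mulVec y = 0) :
    ∃ w ∈ V, IsPrimVec w ∧
      ¬ ∀ x : perpSub (gramI 2 10) (Submodule.span ℤ {w}),
          Even ((x : Fin (2 + 10) → ℤ) ⬝ᵥ (gramI 2 10).mulVec (x : Fin (2 + 10) → ℤ)) :=
  period_lattice_stmt11_general V hrank hprim
end

section
/- Let L be an even unimodular ℤ-lattice, A a primitive sublattice of L, and B = A⊥ its orthogonal complement, and suppose A ⊕ B has finite index in L and every element of the dual lattice A* has integral norm. Then: the image of L under orthogonal projection to A ⊗ ℚ is A* and under orthogonal projection to B ⊗ ℚ is B*; every element of B* has integral norm; the two projections induce a group isomorphism g : A*/A → B*/B; and g carries the quadratic form on A*/A given by reducing norms modulo 2 to the corresponding quadratic form on B*/B. -/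
open Matrix

/-! Unimodularity identifies `L` with its dual, and a retraction `L → A` (which exists because `A`
is primitive) extends every functional that is integral on `A` to all of `L`; so each `a ∈ A*` is
the `A ⊗ ℚ`-component of a lattice vector, i.e. `L` projects onto `A*`. Finite index of `A ⊕ B`
and unimodularity give `A⊥ ∩ A⊥⊥ = 0`, so the primitive `A` equals `A⊥⊥` and everything is
symmetric in `A` and `B`. The pairs `(a, b) ∈ A* × B*` with `a + b ∈ L` map onto `A*/A` and onto
`B*/B` with the same kernel `A × B`, which gives `g`. Finally `a ⊥ b`, so
`⟨a, a⟩ + ⟨b, b⟩ = ⟨a + b, a + b⟩` is even, which gives the integrality of norms on `B*` and the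
compatibility of the two forms mod 2. -/

theorem Matrix.IsSymm.dotProduct_mulVec_comm {n R : Type*} [Fintype n] [CommSemiring R]
    {M : Matrix n n R} (hM : M.IsSymm) (v w : n → R) : v ⬝ᵥ M *ᵥ w = w ⬝ᵥ M *ᵥ v := by
  rw [dotProduct_mulVec, ← hM.eq, vecMul_transpose, dotProduct_comm, hM.eq]

section

variable {N : ℕ} {Gm : Matrix (Fin N) (Fin N) ℤ}

theorem intToRat_dotProduct_mulVec (G : Matrix (Fin N) (Fin N) ℤ) (x y : Fin N → ℤ) :
    intToRat N x ⬝ᵥ (G.map (Int.cast : ℤ → ℚ)) *ᵥ intToRat N y = ((x ⬝ᵥ G *ᵥ y : ℤ) : ℚ) := by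
  simp [dotProduct, mulVec, intToRat, Finset.mul_sum]

theorem exists_ne_zero_smul_eq_intToRat (v : Fin N → ℚ) :
    ∃ m : ℤ, m ≠ 0 ∧ ∃ w : Fin N → ℤ, (m : ℚ) • v = intToRat N w := by
  set m : ℤ := ∏ i, ((v i).den : ℤ)
  refine ⟨m, Finset.prod_ne_zero_iff.2 fun i _ => by exact_mod_cast (v i).den_nz,
    fun i => m / (v i).den * (v i).num, funext fun i => ?_⟩
  have hdvd : ((v i).den : ℤ) ∣ m := Finset.dvd_prod_of_mem _ (Finset.mem_univ i)
  have hden : ((v i).den : ℚ) ≠ 0 := by exact_mod_cast (v i).den_nz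
  change (m : ℚ) * v i = ((m / (v i).den * (v i).num : ℤ) : ℚ)
  rw [Int.cast_mul, Int.cast_div hdvd (by exact_mod_cast hden), ← Rat.mul_den_eq_num]
  push_cast
  field_simp

theorem exists_dotProduct_mulVec_eq (hLu : IsUnit Gm.det) (f : (Fin N → ℤ) →ₗ[ℤ] ℚ)
    (hf : ∀ y, ∃ k : ℤ, f y = k) : ∃ x : Fin N → ℤ, ∀ y, ((x ⬝ᵥ Gm *ᵥ y : ℤ) : ℚ) = f y := by
  choose c hc using fun i => hf (Pi.single i 1)
  obtain ⟨x, hx⟩ := vecMul_surjective_iff_isUnit.2 ((isUnit_iff_isUnit_det Gm).2 hLu) c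
  refine ⟨x, fun y => ?_⟩
  rw [dotProduct_mulVec, show x ᵥ* Gm = c from hx]
  conv_rhs => rw [← Finset.univ_sum_single y]
  simp only [map_sum, dotProduct, Int.cast_sum, Int.cast_mul]
  refine Finset.sum_congr rfl fun i _ => ?_
  have : Pi.single i (y i) = y i • (Pi.single i 1 : Fin N → ℤ) := by
    rw [← Pi.single_smul', smul_eq_mul, mul_one]
  rw [this, map_zsmul, hc, zsmul_eq_mul, mul_comm]

def ratSpan (A : Submodule ℤ (Fin N → ℤ)) : Submodule ℚ (Fin N → ℚ) :=
  Submodule.span ℚ (intToRat N '' A)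

theorem intToRat_mem_ratSpan {A : Submodule ℤ (Fin N → ℤ)} {x : Fin N → ℤ} (hx : x ∈ A) :
    intToRat N x ∈ ratSpan A :=
  Submodule.subset_span ⟨x, hx, rfl⟩

variable {A : Submodule ℤ (Fin N → ℤ)}

theorem dotProduct_mulVec_eq_zero_of_mem_ratSpan {w v : Fin N → ℚ}
    (h : ∀ a ∈ A, intToRat N a ⬝ᵥ (Gm.map (Int.cast : ℤ → ℚ)) *ᵥ w = 0) (hv : v ∈ ratSpan A) :
    v ⬝ᵥ (Gm.map (Int.cast : ℤ → ℚ)) *ᵥ w = 0 := by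
  induction hv using Submodule.span_induction with
  | mem x hx => obtain ⟨a, ha, rfl⟩ := hx; exact h a ha
  | zero => simp
  | add x y _ _ hx hy => rw [add_dotProduct, hx, hy, add_zero]
  | smul c x _ hx => rw [smul_dotProduct, hx, smul_zero]

theorem mem_ratSpan_perpSub_iff {v : Fin N → ℚ} :
    v ∈ ratSpan (perpSub Gm A) ↔
      ∀ a ∈ A, v ⬝ᵥ (Gm.map (Int.cast : ℤ → ℚ)) *ᵥ intToRat N a = 0 := by
  refine ⟨fun hv a ha => dotProduct_mulVec_eq_zero_of_mem_ratSpan (fun b hb => ?_) hv,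
    fun h => ?_⟩
  · rw [intToRat_dotProduct_mulVec, hb a ha, Int.cast_zero]
  obtain ⟨m, hm, w, hmv⟩ := exists_ne_zero_smul_eq_intToRat v
  have hw : w ∈ perpSub Gm A := fun a ha => by
    have := congrArg (· ⬝ᵥ (Gm.map (Int.cast : ℤ → ℚ)) *ᵥ intToRat N a) hmv
    simp only [smul_dotProduct, h a ha, smul_zero, intToRat_dotProduct_mulVec] at this
    exact_mod_cast this.symm
  rw [← (Submodule.smul_mem_iff _ (Int.cast_ne_zero.2 hm : (m : ℚ) ≠ 0)), hmv]
  exact intToRat_mem_ratSpan hw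

theorem mem_perpSub_of_intToRat_mem_ratSpan {z : Fin N → ℤ}
    (hz : intToRat N z ∈ ratSpan (perpSub Gm A)) : z ∈ perpSub Gm A := fun a ha => by
  have := mem_ratSpan_perpSub_iff.1 hz a ha
  rwa [intToRat_dotProduct_mulVec, Int.cast_eq_zero] at this

theorem dotProduct_mulVec_eq_zero_of_mem_ratSpan_perpSub (hLs : Gm.IsSymm) {a b : Fin N → ℚ}
    (ha : a ∈ ratSpan A) (hb : b ∈ ratSpan (perpSub Gm A)) :
    a ⬝ᵥ (Gm.map (Int.cast : ℤ → ℚ)) *ᵥ b = 0 :=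
  dotProduct_mulVec_eq_zero_of_mem_ratSpan (fun a' ha' => by
    rw [(hLs.map _).dotProduct_mulVec_comm]; exact mem_ratSpan_perpSub_iff.1 hb a' ha') ha

theorem IsPrimSub.exists_retraction (hprim : IsPrimSub A) :
    ∃ p : (Fin N → ℤ) →ₗ[ℤ] (Fin N → ℤ), (∀ x, p x ∈ A) ∧ ∀ a ∈ A, p a = a := by
  have : Module.IsTorsionFree ℤ ((Fin N → ℤ) ⧸ A) := .of_smul_eq_zero fun k q hkq => by
    obtain ⟨x, rfl⟩ := A.mkQ_surjective q
    refine or_iff_not_imp_left.2 fun hk => ?_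
    rw [Submodule.mkQ_apply, ← Submodule.Quotient.mk_smul, Submodule.Quotient.mk_eq_zero] at hkq
    exact (Submodule.Quotient.mk_eq_zero A).2 (hprim x k hk hkq)
  have : Module.Free ℤ ((Fin N → ℤ) ⧸ A) := Module.free_of_finite_type_torsion_free'
  obtain ⟨s, hs⟩ := Module.projective_lifting_property A.mkQ LinearMap.id A.mkQ_surjective
  refine ⟨LinearMap.id - s ∘ₗ A.mkQ, fun x => ?_, fun a ha => ?_⟩
  · rw [← Submodule.Quotient.mk_eq_zero]
    simpa using sub_eq_zero.2 (LinearMap.congr_fun hs (A.mkQ x)).symm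
  · simp [(Submodule.Quotient.mk_eq_zero A).2 ha]

theorem exists_intToRat_sub_mem_ratSpan_perpSub (hLu : IsUnit Gm.det) (hprim : IsPrimSub A)
    {a : Fin N → ℚ} (ha : a ∈ pairDual Gm A) :
    ∃ x : Fin N → ℤ, intToRat N x - a ∈ ratSpan (perpSub Gm A) := by
  obtain ⟨p, hpA, hpid⟩ := hprim.exists_retraction
  obtain ⟨x, hx⟩ := exists_dotProduct_mulVec_eq hLu
    ((toLinearMap₂' ℚ (Gm.map (Int.cast : ℤ → ℚ)) a).restrictScalars ℤ ∘ₗ intToRat N ∘ₗ p)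
    fun y => by simpa [toLinearMap₂'_apply'] using ha _ (hpA y)
  refine ⟨x, mem_ratSpan_perpSub_iff.2 fun y hy => ?_⟩
  have hxy := hx y
  rw [LinearMap.comp_apply, LinearMap.comp_apply, LinearMap.restrictScalars_apply,
    toLinearMap₂'_apply', hpid y hy] at hxy
  rw [sub_dotProduct, intToRat_dotProduct_mulVec, hxy, sub_self]

theorem mem_pairDual_of_dotProduct_mulVec_sub_eq_zero {a : Fin N → ℚ} (x : Fin N → ℤ)
    (h : ∀ y ∈ A, (intToRat N x - a) ⬝ᵥ (Gm.map (Int.cast : ℤ → ℚ)) *ᵥ intToRat N y = 0) :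
    a ∈ pairDual Gm A := fun y hy => by
  have hxy := h y hy
  rw [sub_dotProduct, sub_eq_zero, intToRat_dotProduct_mulVec] at hxy
  exact ⟨x ⬝ᵥ Gm *ᵥ y, hxy.symm⟩

theorem setOf_projection_eq_relDual (hLu : IsUnit Gm.det) (hprim : IsPrimSub A) :
    {a : Fin N → ℚ | a ∈ ratSpan A ∧ ∃ x : Fin N → ℤ, intToRat N x - a ∈ ratSpan (perpSub Gm A)} =
      (relDual Gm A : Set (Fin N → ℚ)) := by
  ext a
  refine ⟨fun ⟨haA, x, hx⟩ => ⟨haA, ?_⟩, fun ha => ⟨ha.1, ?_⟩⟩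
  · exact mem_pairDual_of_dotProduct_mulVec_sub_eq_zero x (mem_ratSpan_perpSub_iff.1 hx)
  · exact exists_intToRat_sub_mem_ratSpan_perpSub hLu hprim ha.2

theorem exists_intToRat_eq_add (hLs : Gm.IsSymm) (hLu : IsUnit Gm.det) (hprim : IsPrimSub A)
    {a : Fin N → ℚ} (ha : a ∈ relDual Gm A) :
    ∃ x : Fin N → ℤ, ∃ b ∈ relDual Gm (perpSub Gm A), intToRat N x = a + b := by
  obtain ⟨x, hx⟩ := exists_intToRat_sub_mem_ratSpan_perpSub hLu hprim ha.2
  refine ⟨x, _, ⟨hx, mem_pairDual_of_dotProduct_mulVec_sub_eq_zero x fun y hy => ?_⟩,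
    (add_sub_cancel a _).symm⟩
  rw [sub_sub_cancel]
  exact dotProduct_mulVec_eq_zero_of_mem_ratSpan_perpSub hLs ha.1 (intToRat_mem_ratSpan hy)

theorem isPrimSub_perpSub (A : Submodule ℤ (Fin N → ℤ)) : IsPrimSub (perpSub Gm A) :=
  fun x k hk hkx a ha => by
    have := hkx a ha
    rw [smul_dotProduct, smul_eq_mul, mul_eq_zero] at this
    exact this.resolve_left hk

theorem le_perpSub_perpSub (hLs : Gm.IsSymm) : A ≤ perpSub Gm (perpSub Gm A) :=
  fun a ha b hb => by rw [hLs.dotProduct_mulVec_comm]; exact hb a ha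

theorem perpSub_inf_perpSub_perpSub_eq_bot (hLu : IsUnit Gm.det)
    (hfin : ∀ x : Fin N → ℤ, ∃ k : ℤ, k ≠ 0 ∧ k • x ∈ A ⊔ perpSub Gm A) :
    perpSub Gm A ⊓ perpSub Gm (perpSub Gm A) = ⊥ := by
  refine eq_bot_iff.2 fun v ⟨hvA, hvB⟩ => ?_
  have hv : v ᵥ* Gm = 0 := dotProduct_eq_zero _ fun y => by
    obtain ⟨k, hk, hky⟩ := hfin y
    obtain ⟨a, ha, b, hb, hab⟩ := Submodule.mem_sup.1 hky
    have : k * (v ⬝ᵥ Gm *ᵥ y) = 0 := by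
      rw [← smul_eq_mul, ← dotProduct_smul, ← mulVec_smul, ← hab, mulVec_add, dotProduct_add,
        hvA a ha, hvB b hb, add_zero]
    rw [← dotProduct_mulVec]
    exact (mul_eq_zero.1 this).resolve_left hk
  exact vecMul_injective_of_isUnit ((isUnit_iff_isUnit_det Gm).2 hLu) (by simpa using hv)

theorem perpSub_perpSub_eq (hLs : Gm.IsSymm) (hLu : IsUnit Gm.det) (hprim : IsPrimSub A)
    (hfin : ∀ x : Fin N → ℤ, ∃ k : ℤ, k ≠ 0 ∧ k • x ∈ A ⊔ perpSub Gm A) :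
    perpSub Gm (perpSub Gm A) = A := by
  refine le_antisymm (fun x hx => ?_) (le_perpSub_perpSub hLs)
  obtain ⟨k, hk, hkx⟩ := hfin x
  obtain ⟨a, ha, b, hb, hab⟩ := Submodule.mem_sup.1 hkx
  have hb' : b ∈ perpSub Gm (perpSub Gm A) := by
    rw [eq_sub_of_add_eq' hab]
    exact sub_mem (Submodule.smul_mem _ k hx) (le_perpSub_perpSub hLs ha)
  have hb0 : b = 0 := by
    rw [← Submodule.mem_bot ℤ, ← perpSub_inf_perpSub_perpSub_eq_bot hLu hfin]
    exact ⟨hb, hb'⟩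
  exact hprim x k hk (by rw [← hab, hb0, add_zero]; exact ha)

theorem exists_intToRat_eq_add_of_mem_relDual_perpSub (hLs : Gm.IsSymm) (hLu : IsUnit Gm.det)
    (hprim : IsPrimSub A) (hfin : ∀ x : Fin N → ℤ, ∃ k : ℤ, k ≠ 0 ∧ k • x ∈ A ⊔ perpSub Gm A)
    {b : Fin N → ℚ} (hb : b ∈ relDual Gm (perpSub Gm A)) :
    ∃ x : Fin N → ℤ, ∃ a ∈ relDual Gm A, intToRat N x = a + b := by
  obtain ⟨x, a, ha, hx⟩ := exists_intToRat_eq_add hLs hLu (isPrimSub_perpSub A) hb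
  rw [perpSub_perpSub_eq hLs hLu hprim hfin] at ha
  exact ⟨x, a, ha, hx.trans (add_comm b a)⟩

theorem dotProduct_mulVec_add_self (hLs : Gm.IsSymm) {a b : Fin N → ℚ} (ha : a ∈ ratSpan A)
    (hb : b ∈ ratSpan (perpSub Gm A)) :
    (a + b) ⬝ᵥ (Gm.map (Int.cast : ℤ → ℚ)) *ᵥ (a + b) =
      a ⬝ᵥ (Gm.map (Int.cast : ℤ → ℚ)) *ᵥ a + b ⬝ᵥ (Gm.map (Int.cast : ℤ → ℚ)) *ᵥ b := by
  have hab := dotProduct_mulVec_eq_zero_of_mem_ratSpan_perpSub hLs ha hb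
  rw [(hLs.map _).dotProduct_mulVec_comm] at hab
  rw [add_dotProduct, mulVec_add, dotProduct_add, dotProduct_add, hab,
    (hLs.map _).dotProduct_mulVec_comm a b, hab]
  ring

theorem exists_dotProduct_mulVec_add_eq_two_mul (hLs : Gm.IsSymm) (hLe : EvenGram Gm)
    {x : Fin N → ℤ} {a b : Fin N → ℚ} (hx : intToRat N x = a + b) (ha : a ∈ ratSpan A)
    (hb : b ∈ ratSpan (perpSub Gm A)) :
    ∃ m : ℤ, a ⬝ᵥ (Gm.map (Int.cast : ℤ → ℚ)) *ᵥ a + b ⬝ᵥ (Gm.map (Int.cast : ℤ → ℚ)) *ᵥ b =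
      2 * m := by
  obtain ⟨m, hm⟩ := hLe x
  refine ⟨m, ?_⟩
  rw [← dotProduct_mulVec_add_self hLs ha hb, ← hx, intToRat_dotProduct_mulVec, hm]
  push_cast
  ring

theorem mem_map_perpSub_of_intToRat_eq_add {x : Fin N → ℤ} {a b : Fin N → ℚ}
    (hx : intToRat N x = a + b) (ha : a ∈ Submodule.map (intToRat N) A)
    (hb : b ∈ ratSpan (perpSub Gm A)) : b ∈ Submodule.map (intToRat N) (perpSub Gm A) := by
  obtain ⟨z, -, rfl⟩ := ha
  have hb' : intToRat N (x - z) = b := by rw [map_sub, hx, add_sub_cancel_left]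
  exact ⟨x - z, mem_perpSub_of_intToRat_mem_ratSpan (hb' ▸ hb), hb'⟩

def latticeInRelDual (G : Matrix (Fin N) (Fin N) ℤ) (A : Submodule ℤ (Fin N → ℤ)) :
    Submodule ℤ (relDual G A) :=
  Submodule.comap (relDual G A).subtype (Submodule.map (intToRat N) A)

def latticeSumPairs (G : Matrix (Fin N) (Fin N) ℤ) (A : Submodule ℤ (Fin N → ℤ)) :
    Submodule ℤ (relDual G A × relDual G (perpSub G A)) :=
  (LinearMap.range (intToRat N)).comap
    ((relDual G A).subtype.coprod (relDual G (perpSub G A)).subtype)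

theorem exists_discriminant_linearEquiv (hLs : Gm.IsSymm) (hLu : IsUnit Gm.det)
    (hprim : IsPrimSub A) (hfin : ∀ x : Fin N → ℤ, ∃ k : ℤ, k ≠ 0 ∧ k • x ∈ A ⊔ perpSub Gm A) :
    ∃ g : (relDual Gm A ⧸ latticeInRelDual Gm A) ≃ₗ[ℤ]
        (relDual Gm (perpSub Gm A) ⧸ latticeInRelDual Gm (perpSub Gm A)),
      ∀ (x : Fin N → ℤ) (a : relDual Gm A) (b : relDual Gm (perpSub Gm A)),
        intToRat N x = (a : Fin N → ℚ) + (b : Fin N → ℚ) →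
        g (Submodule.Quotient.mk a) = Submodule.Quotient.mk b := by
  have hdp := perpSub_perpSub_eq hLs hLu hprim hfin
  set qA := (latticeInRelDual Gm A).mkQ ∘ₗ LinearMap.fst ℤ _ _ ∘ₗ (latticeSumPairs Gm A).subtype
  set qB := (latticeInRelDual Gm (perpSub Gm A)).mkQ ∘ₗ LinearMap.snd ℤ _ _ ∘ₗ
    (latticeSumPairs Gm A).subtype
  have hqA : Function.Surjective qA := fun q => by
    obtain ⟨a, rfl⟩ := Submodule.Quotient.mk_surjective _ q
    obtain ⟨x, b, hb, hx⟩ := exists_intToRat_eq_add hLs hLu hprim a.2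
    exact ⟨⟨(a, ⟨b, hb⟩), x, hx⟩, rfl⟩
  have hqB : Function.Surjective qB := fun q => by
    obtain ⟨b, rfl⟩ := Submodule.Quotient.mk_surjective _ q
    obtain ⟨x, a, ha, hx⟩ := exists_intToRat_eq_add_of_mem_relDual_perpSub hLs hLu hprim hfin b.2
    exact ⟨⟨(⟨a, ha⟩, b), x, hx⟩, rfl⟩
  have hker : LinearMap.ker qA = LinearMap.ker qB := by
    ext ⟨⟨⟨a, ha⟩, ⟨b, hb⟩⟩, x, hx⟩
    simp only [LinearMap.mem_ker, qA, qB, LinearMap.comp_apply, Submodule.mkQ_apply,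
      Submodule.Quotient.mk_eq_zero]
    change a ∈ Submodule.map (intToRat N) A ↔ b ∈ Submodule.map (intToRat N) (perpSub Gm A)
    refine ⟨fun haA => mem_map_perpSub_of_intToRat_eq_add hx haA hb.1, fun hbB => ?_⟩
    rw [← hdp] at ha ⊢
    exact mem_map_perpSub_of_intToRat_eq_add (hx.trans (add_comm _ _)) hbB ha.1
  refine ⟨(qA.quotKerEquivOfSurjective hqA).symm ≪≫ₗ Submodule.quotEquivOfEq _ _ hker ≪≫ₗ
    qB.quotKerEquivOfSurjective hqB, fun x a b hx => ?_⟩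
  have : Submodule.Quotient.mk a = qA ⟨(a, b), x, hx⟩ := rfl
  rw [this, LinearEquiv.trans_apply, LinearEquiv.trans_apply,
    LinearMap.quotKerEquivOfSurjective_symm_apply, Submodule.quotEquivOfEq_mk,
    LinearMap.quotKerEquivOfSurjective_apply_mk]
  rfl

end

/-- Let `L = ℤ^N` be an even unimodular lattice (Gram matrix `Gm`),
`A` a primitive sublattice, `B = A⊥`, with `A ⊕ B` of finite index in `L` and every
element of `A*` of integral norm.  Then the projection of `L` to `A ⊗ ℚ` is `A*`, the
projection to `B ⊗ ℚ` is `B*`, every element of `B*` has integral norm, and the two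
projections induce an isomorphism `A*/A → B*/B` matching the mod-2 norm forms. -/
theorem period_lattice_stmt17 {N : ℕ} (Gm : Matrix (Fin N) (Fin N) ℤ)
    (hLs : Gm.IsSymm) (hLe : EvenGram Gm) (hLu : IsUnit Gm.det)
    (A : Submodule ℤ (Fin N → ℤ)) (hprim : IsPrimSub A)
    (hfin : ∀ x : Fin N → ℤ, ∃ k : ℤ, k ≠ 0 ∧ k • x ∈ A ⊔ perpSub Gm A)
    (hAdual : ∀ x ∈ relDual Gm A, ∃ k : ℤ,
      x ⬝ᵥ (Gm.map (Int.cast : ℤ → ℚ)).mulVec x = (k : ℚ)) :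
    ({a : Fin N → ℚ | a ∈ Submodule.span ℚ (intToRat N '' (A : Set (Fin N → ℤ))) ∧
        ∃ x : Fin N → ℤ, intToRat N x - a ∈
          Submodule.span ℚ (intToRat N '' (perpSub Gm A : Set (Fin N → ℤ)))} =
      (relDual Gm A : Set (Fin N → ℚ))) ∧
    ({b : Fin N → ℚ | b ∈ Submodule.span ℚ (intToRat N '' (perpSub Gm A : Set (Fin N → ℤ))) ∧
        ∃ x : Fin N → ℤ, intToRat N x - b ∈
          Submodule.span ℚ (intToRat N '' (A : Set (Fin N → ℤ)))} =
      (relDual Gm (perpSub Gm A) : Set (Fin N → ℚ))) ∧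
    (∀ b ∈ relDual Gm (perpSub Gm A), ∃ k : ℤ,
      b ⬝ᵥ (Gm.map (Int.cast : ℤ → ℚ)).mulVec b = (k : ℚ)) ∧
    (∃ g : (relDual Gm A ⧸ Submodule.comap (relDual Gm A).subtype
            (Submodule.map (intToRat N) A)) ≃ₗ[ℤ]
          (relDual Gm (perpSub Gm A) ⧸ Submodule.comap (relDual Gm (perpSub Gm A)).subtype
            (Submodule.map (intToRat N) (perpSub Gm A))),
      (∀ (x : Fin N → ℤ) (a : relDual Gm A) (b : relDual Gm (perpSub Gm A)),
        intToRat N x = (a : Fin N → ℚ) + (b : Fin N → ℚ) →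
        g (Submodule.Quotient.mk a) = Submodule.Quotient.mk b) ∧
      (∀ (a : relDual Gm A) (b : relDual Gm (perpSub Gm A)),
        g (Submodule.Quotient.mk a) = Submodule.Quotient.mk b →
        ∃ k : ℤ,
          (b : Fin N → ℚ) ⬝ᵥ (Gm.map (Int.cast : ℤ → ℚ)).mulVec (b : Fin N → ℚ)
            - (a : Fin N → ℚ) ⬝ᵥ (Gm.map (Int.cast : ℤ → ℚ)).mulVec (a : Fin N → ℚ)
          = 2 * (k : ℚ))) := by
  have hdp := perpSub_perpSub_eq hLs hLu hprim hfin
  have hB := setOf_projection_eq_relDual hLu (isPrimSub_perpSub (Gm := Gm) A)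
  rw [hdp] at hB
  obtain ⟨g, hg⟩ := exists_discriminant_linearEquiv hLs hLu hprim hfin
  refine ⟨setOf_projection_eq_relDual hLu hprim, hB, fun b hb => ?_, g, hg, fun a b hab => ?_⟩
  · obtain ⟨x, a, ha, hx⟩ := exists_intToRat_eq_add_of_mem_relDual_perpSub hLs hLu hprim hfin hb
    obtain ⟨m, hm⟩ := exists_dotProduct_mulVec_add_eq_two_mul hLs hLe hx ha.1 hb.1
    obtain ⟨k, hk⟩ := hAdual a ha
    exact ⟨2 * m - k, by push_cast; linear_combination hm - hk⟩
  · obtain ⟨x, b', hb', hx⟩ := exists_intToRat_eq_add hLs hLu hprim a.2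
    obtain ⟨z, -, hz⟩ := (Submodule.Quotient.eq _).1 ((hg x a ⟨b', hb'⟩ hx).symm.trans hab)
    have hxz : intToRat N (x - z) = a + b := by
      rw [map_sub, hx, hz, Submodule.subtype_apply, Submodule.coe_sub]
      abel
    obtain ⟨m, hm⟩ := exists_dotProduct_mulVec_add_eq_two_mul hLs hLe hxz a.2.1 b.2.1
    obtain ⟨k, hk⟩ := hAdual a a.2
    exact ⟨m - k, by push_cast; linear_combination hm - 2 * hk⟩
end
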